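/- arXiv:2309.02015 — 3 statements merged into one kernel-verified Lean document; each statement's English description precedes it below -/
import Mathlib

section
/- For every real parameter a > 0 and every s ∈ ℂ with Re s > 3, all the series defining η_a(s) and θ_a(s) converge absolutely and η_a(s) = θ_a(s) + (2a)^{−s} + 4 a^s ζ(s−1), where ζ denotes the Riemann zeta function. -/
noncomputable section

/-- `μ_a(n,l) := n(n+2) + (a⁻² − 1)(n − 2l)²`. -/
def muBerger (a : ℝ) (n l : ℕ) : ℝ :=
  (n : ℝ) * ((n : ℝ) + 2) + ((a ^ 2)⁻¹ - 1) * ((n : ℝ) - 2 * (l : ℝ)) ^ 2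

/-- The multiplicity `m(n,l)`. -/
def multBerger (n l : ℕ) : ℕ :=
  if Even n ∧ 2 * l = n then n + 1 else 2 * n + 2

/-- The eta function of `curl` on the Berger 3-sphere with parameter `a`. -/
def etaBergerCurl (a : ℝ) (s : ℂ) : ℂ :=
  (∑' n : ℕ, (2 * ((n : ℂ) + 2) - 2) * (((((n : ℝ) + 2) / a) : ℝ) : ℂ) ^ (-s))
    + ((2 * a : ℝ) : ℂ) ^ (-s)
    + (∑' n : ℕ,
        (2 * ((n : ℂ) + 3) - 2) * ((((((n : ℝ) + 3) + 2 * (a ^ 2 - 1)) / a) : ℝ) : ℂ) ^ (-s))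
    + ∑' n : ℕ, ∑ l ∈ Finset.Icc 1 ((n + 2) / 2),
        (multBerger (n + 2) l : ℂ) *
          (((a + Real.sqrt (a ^ 2 + muBerger a (n + 2) l) : ℝ) : ℂ) ^ (-s)
            - ((Real.sqrt (a ^ 2 + muBerger a (n + 2) l) - a : ℝ) : ℂ) ^ (-s))

/-- `θ_a(s) := Σ_{n≥1} Σ_{l=0}^{⌊n/2⌋} m(n,l)[(√(a²+μ_a(n,l))+a)^{−s} − (√(a²+μ_a(n,l))−a)^{−s}]`. -/
def thetaBerger (a : ℝ) (s : ℂ) : ℂ :=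
  ∑' n : ℕ, ∑ l ∈ Finset.Icc 0 ((n + 1) / 2),
    (multBerger (n + 1) l : ℂ) *
      (((Real.sqrt (a ^ 2 + muBerger a (n + 1) l) + a : ℝ) : ℂ) ^ (-s)
        - ((Real.sqrt (a ^ 2 + muBerger a (n + 1) l) - a : ℝ) : ℂ) ^ (-s))

/-! For `l = 0` the number `a² + μ_a(n,0) = (a + n/a)²` is a perfect square, so the `l = 0` part
of `θ_a(s)` is `Σ_{n≥1} (2n+2) [((n + 2a²)/a)^{-s} - (n/a)^{-s}]`. Its first half is the third
series of `η_a(s)`, and the `l ≥ 1` part of `θ_a(s)` is the last one. What remains of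
`η_a(s) - θ_a(s) - (2a)^{-s}` is `Σ_{n≥2} (2n-2) (n/a)^{-s} + Σ_{n≥1} (2n+2) (n/a)^{-s}
= Σ_{n≥1} 4n (n/a)^{-s} = 4 aˢ ζ(s-1)`.

Absolute convergence comes from `√(a² + μ_a(n,l)) - a ≥ min(1, 1/a) n` for `2l ≤ n`: the `n`-th
block of `θ_a(s)` has at most `n` terms of size `O(n^{1 - Re s})`. -/

open Finset

lemma summable_of_norm_le_mul_rpow_nat_add_one {E : Type*} [NormedAddCommGroup E]
    [CompleteSpace E] {f : ℕ → E} {C p : ℝ} (hp : p < -1)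
    (hf : ∀ n : ℕ, ‖f n‖ ≤ C * ((n : ℝ) + 1) ^ p) : Summable f := by
  have hsum : Summable fun n : ℕ => ((n : ℝ) + 1) ^ p := by
    simpa using (summable_nat_add_iff 1).mpr (Real.summable_nat_rpow.mpr hp)
  exact .of_norm_bounded (hsum.mul_left C) hf

lemma norm_ofReal_cpow_neg_le {x y : ℝ} {s : ℂ} (hy : 0 < y) (hyx : y ≤ x) (hs : 0 ≤ s.re) :
    ‖(x : ℂ) ^ (-s)‖ ≤ y ^ (-s.re) := by
  rw [Complex.norm_cpow_eq_rpow_re_of_pos (hy.trans_le hyx), Complex.neg_re]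
  exact Real.rpow_le_rpow_of_nonpos hy hyx (neg_nonpos.mpr hs)

lemma summable_norm_mul_ofReal_cpow_neg {c : ℕ → ℂ} {x : ℕ → ℝ} {C δ : ℝ} {s : ℂ}
    (hs : 2 < s.re) (hδ : 0 < δ) (hc : ∀ n : ℕ, ‖c n‖ ≤ C * ((n : ℝ) + 1))
    (hx : ∀ n : ℕ, δ * ((n : ℝ) + 1) ≤ x n) :
    Summable fun n : ℕ => ‖c n * (x n : ℂ) ^ (-s)‖ := by
  refine summable_of_norm_le_mul_rpow_nat_add_one (C := C * δ ^ (-s.re)) (p := 1 - s.re)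
    (by linarith) fun n => ?_
  have hn : (0 : ℝ) < (n : ℝ) + 1 := by positivity
  rw [norm_norm, norm_mul]
  calc ‖c n‖ * ‖(x n : ℂ) ^ (-s)‖
      ≤ C * ((n : ℝ) + 1) * (δ * ((n : ℝ) + 1)) ^ (-s.re) :=
        mul_le_mul (hc n) (norm_ofReal_cpow_neg_le (by positivity) (hx n) (by linarith))
          (norm_nonneg _) ((norm_nonneg _).trans (hc n))
    _ = C * δ ^ (-s.re) * ((n : ℝ) + 1) ^ (1 - s.re) := by
        rw [Real.mul_rpow hδ.le hn.le, sub_eq_neg_add, Real.rpow_add_one hn.ne']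
        ring

lemma norm_natCast_le_mul_add_one {m : ℕ} (n c : ℕ) (h : m ≤ c * (n + 1)) :
    ‖(m : ℂ)‖ ≤ c * ((n : ℝ) + 1) := by
  rw [Complex.norm_natCast]; exact_mod_cast h

section Berger

variable {a : ℝ} {s : ℂ}

lemma summable_norm_mul_ofReal_div_cpow_neg (ha : 0 < a) (hs : 2 < s.re) {c : ℕ → ℂ}
    {x : ℕ → ℝ} {C : ℝ} (hc : ∀ n : ℕ, ‖c n‖ ≤ C * ((n : ℝ) + 1))
    (hx : ∀ n : ℕ, (n : ℝ) + 1 ≤ x n) :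
    Summable fun n : ℕ => ‖c n * ((x n / a : ℝ) : ℂ) ^ (-s)‖ :=
  summable_norm_mul_ofReal_cpow_neg hs (inv_pos.mpr ha) hc fun n => by
    rw [div_eq_inv_mul]; exact mul_le_mul_of_nonneg_left (hx n) (inv_pos.mpr ha).le

-- `K = min 1 a⁻¹` has `a K ≤ 1` and `K² ≤ min 1 a⁻²`, while `μ_a(n,l) ≥ 2n + min 1 a⁻² n²`.
lemma le_muBerger (ha : 0 < a) {n l : ℕ} (hl : 2 * l ≤ n) :
    2 * a * (min 1 a⁻¹ * n) + (min 1 a⁻¹ * n) ^ 2 ≤ muBerger a n l := by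
  have hj : 0 ≤ (n : ℝ) - 2 * l := by
    rw [sub_nonneg]; exact_mod_cast hl
  have hjn : (n : ℝ) - 2 * l ≤ n := by linarith [(Nat.cast_nonneg l : (0 : ℝ) ≤ l)]
  have hn : (0 : ℝ) ≤ n := Nat.cast_nonneg n
  unfold muBerger
  rcases le_total a 1 with h | h
  · have hinv : 1 ≤ (a ^ 2)⁻¹ := one_le_inv_iff₀.mpr ⟨by positivity, by nlinarith⟩
    rw [min_eq_left ((one_le_inv₀ ha).mpr h)]
    nlinarith [mul_nonneg (sub_nonneg.mpr hinv) (sq_nonneg ((n : ℝ) - 2 * l))]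
  · have hinv : (a ^ 2)⁻¹ ≤ 1 := inv_le_one_of_one_le₀ (by nlinarith)
    have h2n : 2 * a * (a⁻¹ * n) = 2 * n := by field_simp
    rw [min_eq_right (inv_le_one_of_one_le₀ h), h2n, mul_pow, inv_pow]
    nlinarith [mul_le_mul_of_nonneg_left (pow_le_pow_left₀ hj hjn 2) (sub_nonneg.mpr hinv)]

lemma add_min_mul_le_sqrt (ha : 0 < a) {n l : ℕ} (hl : 2 * l ≤ n) :
    a + min 1 a⁻¹ * n ≤ √(a ^ 2 + muBerger a n l) :=
  Real.le_sqrt_of_sq_le (by nlinarith [le_muBerger ha hl])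

def thetaTerm (a : ℝ) (s : ℂ) (n l : ℕ) : ℂ :=
  (multBerger n l : ℂ) *
    (((√(a ^ 2 + muBerger a n l) + a : ℝ) : ℂ) ^ (-s)
      - ((√(a ^ 2 + muBerger a n l) - a : ℝ) : ℂ) ^ (-s))

lemma multBerger_le (n l : ℕ) : multBerger n l ≤ 2 * n + 2 := by
  unfold multBerger; split_ifs <;> omega

lemma norm_thetaTerm_le (ha : 0 < a) (hs : 0 ≤ s.re) {n l : ℕ} (hn : 1 ≤ n) (hl : 2 * l ≤ n) :
    ‖thetaTerm a s n l‖ ≤ 4 * n * (2 * (min 1 a⁻¹ * n) ^ (-s.re)) := by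
  have hn' : (1 : ℝ) ≤ n := by exact_mod_cast hn
  have hK : 0 < min 1 a⁻¹ * n := mul_pos (lt_min one_pos (inv_pos.mpr ha)) (by positivity)
  have hR := add_min_mul_le_sqrt ha hl
  have hm : ‖(multBerger n l : ℂ)‖ ≤ 4 * n := by
    rw [Complex.norm_natCast]
    have : (multBerger n l : ℝ) ≤ 2 * n + 2 := by exact_mod_cast multBerger_le n l
    linarith
  have hdiff : ‖((√(a ^ 2 + muBerger a n l) + a : ℝ) : ℂ) ^ (-s)
      - ((√(a ^ 2 + muBerger a n l) - a : ℝ) : ℂ) ^ (-s)‖ ≤ 2 * (min 1 a⁻¹ * n) ^ (-s.re) :=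
    (norm_sub_le _ _).trans <| by
      linarith [norm_ofReal_cpow_neg_le hK (by linarith) hs (x := √(a ^ 2 + muBerger a n l) + a),
        norm_ofReal_cpow_neg_le hK (by linarith) hs (x := √(a ^ 2 + muBerger a n l) - a)]
  rw [thetaTerm, norm_mul]
  exact mul_le_mul hm hdiff (norm_nonneg _) (by positivity)

lemma summable_sum_norm_thetaTerm (ha : 0 < a) (hs : 3 < s.re) :
    Summable fun n : ℕ => ∑ l ∈ Icc 0 ((n + 1) / 2), ‖thetaTerm a s (n + 1) l‖ := by
  set K := min 1 a⁻¹
  have hK : 0 < K := lt_min one_pos (inv_pos.mpr ha)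
  refine summable_of_norm_le_mul_rpow_nat_add_one (C := 8 * K ^ (-s.re)) (p := 2 - s.re)
    (by linarith) fun n => ?_
  have hn : (0 : ℝ) < n + 1 := by positivity
  have hcard : (#(Icc 0 ((n + 1) / 2)) : ℝ) ≤ n + 1 := by
    rw [Nat.card_Icc]; exact_mod_cast (by omega : (n + 1) / 2 + 1 - 0 ≤ n + 1)
  rw [Real.norm_of_nonneg (sum_nonneg fun _ _ => norm_nonneg _)]
  calc ∑ l ∈ Icc 0 ((n + 1) / 2), ‖thetaTerm a s (n + 1) l‖
      ≤ #(Icc 0 ((n + 1) / 2)) •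
          (4 * ((n + 1 : ℕ) : ℝ) * (2 * (K * ((n + 1 : ℕ) : ℝ)) ^ (-s.re))) :=
        sum_le_card_nsmul _ _ _ fun l hl =>
          norm_thetaTerm_le ha (by linarith) (by omega) (by rw [mem_Icc] at hl; omega)
    _ ≤ ((n : ℝ) + 1) * (4 * ((n : ℝ) + 1) * (2 * (K * ((n : ℝ) + 1)) ^ (-s.re))) := by
        rw [nsmul_eq_mul]; push_cast; gcongr
    _ = 8 * K ^ (-s.re) * ((n : ℝ) + 1) ^ (2 - s.re) := by
        rw [Real.mul_rpow hK.le hn.le, show 2 - s.re = -s.re + 1 + 1 by ring,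
          Real.rpow_add_one hn.ne', Real.rpow_add_one hn.ne']
        ring

lemma summable_sum_Icc_one_norm_thetaTerm (ha : 0 < a) (hs : 3 < s.re) :
    Summable fun n : ℕ => ∑ l ∈ Icc 1 ((n + 1) / 2), ‖thetaTerm a s (n + 1) l‖ :=
  (summable_sum_norm_thetaTerm ha hs).of_nonneg_of_le
    (fun _ => sum_nonneg fun _ _ => norm_nonneg _) fun _ =>
      sum_le_sum_of_subset_of_nonneg (Icc_subset_Icc_left zero_le_one) fun _ _ _ => norm_nonneg _

lemma multBerger_mul_add_sqrt_sub_eq_thetaTerm (s : ℂ) (n l : ℕ) :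
    (multBerger n l : ℂ) * (((a + √(a ^ 2 + muBerger a n l) : ℝ) : ℂ) ^ (-s)
      - ((√(a ^ 2 + muBerger a n l) - a : ℝ) : ℂ) ^ (-s)) = thetaTerm a s n l := by
  rw [thetaTerm, add_comm a]

lemma thetaTerm_succ_zero (ha : 0 < a) (s : ℂ) (n : ℕ) :
    thetaTerm a s (n + 1) 0 =
      ((2 * n + 4 : ℕ) : ℂ) * ((((n : ℝ) + 1 + 2 * a ^ 2) / a : ℝ) : ℂ) ^ (-s)
        - ((2 * n + 4 : ℕ) : ℂ) * ((((n : ℝ) + 1) / a : ℝ) : ℂ) ^ (-s) := by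
  have hsq : a ^ 2 + muBerger a (n + 1) 0 = (a + ((n : ℝ) + 1) / a) ^ 2 := by
    unfold muBerger; field_simp; push_cast; ring
  have hm : multBerger (n + 1) 0 = 2 * n + 4 := if_neg (by omega)
  rw [thetaTerm, hsq, Real.sqrt_sq (by positivity), hm,
    show a + ((n : ℝ) + 1) / a + a = ((n : ℝ) + 1 + 2 * a ^ 2) / a by field_simp; ring,
    add_sub_cancel_left, mul_sub]

lemma thetaBerger_eq (ha : 0 < a) (hs : 3 < s.re) :
    thetaBerger a s =
      ∑' n : ℕ, ((2 * n + 4 : ℕ) : ℂ) * ((((n : ℝ) + 1 + 2 * a ^ 2) / a : ℝ) : ℂ) ^ (-s)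
        - ∑' n : ℕ, ((2 * n + 4 : ℕ) : ℂ) * ((((n : ℝ) + 1) / a : ℝ) : ℂ) ^ (-s)
        + ∑' n : ℕ, ∑ l ∈ Icc 1 ((n + 2) / 2), thetaTerm a s (n + 2) l := by
  have hs2 : 2 < s.re := by linarith
  have hcoef (n : ℕ) := norm_natCast_le_mul_add_one (m := 2 * n + 4) n 4 (by omega)
  have hE := (summable_norm_mul_ofReal_div_cpow_neg ha hs2 hcoef
    (x := fun n => (n : ℝ) + 1 + 2 * a ^ 2) fun n => by nlinarith [sq_nonneg a]).of_norm
  have hZ := (summable_norm_mul_ofReal_div_cpow_neg ha hs2 hcoef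
    (x := fun n => (n : ℝ) + 1) fun n => le_rfl).of_norm
  have hT : Summable fun n : ℕ => ∑ l ∈ Icc 1 ((n + 1) / 2), thetaTerm a s (n + 1) l :=
    .of_norm_bounded (summable_sum_Icc_one_norm_thetaTerm ha hs) fun n => norm_sum_le _ _
  have hsplit (n : ℕ) : ∑ l ∈ Icc 0 ((n + 1) / 2), thetaTerm a s (n + 1) l =
      thetaTerm a s (n + 1) 0 + ∑ l ∈ Icc 1 ((n + 1) / 2), thetaTerm a s (n + 1) l := by
    rw [← add_sum_Ioc_eq_sum_Icc (Nat.zero_le _), ← Icc_add_one_left_eq_Ioc, zero_add]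
  change ∑' n : ℕ, ∑ l ∈ Icc 0 ((n + 1) / 2), thetaTerm a s (n + 1) l = _
  simp only [hsplit, thetaTerm_succ_zero ha]
  rw [(hE.sub hZ).tsum_add hT, hE.tsum_sub hZ, hT.tsum_eq_zero_add,
    Icc_eq_empty (show ¬1 ≤ (0 + 1) / 2 by norm_num), sum_empty, zero_add]

lemma etaBergerCurl_eq (s : ℂ) :
    etaBergerCurl a s =
      ∑' n : ℕ, (2 * ((n : ℂ) + 2) - 2) * ((((n : ℝ) + 2) / a : ℝ) : ℂ) ^ (-s)
        + ((2 * a : ℝ) : ℂ) ^ (-s)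
        + ∑' n : ℕ, ((2 * n + 4 : ℕ) : ℂ) * ((((n : ℝ) + 1 + 2 * a ^ 2) / a : ℝ) : ℂ) ^ (-s)
        + ∑' n : ℕ, ∑ l ∈ Icc 1 ((n + 2) / 2), thetaTerm a s (n + 2) l := by
  have hthird (n : ℕ) :
      (2 * ((n : ℂ) + 3) - 2) * (((((n : ℝ) + 3) + 2 * (a ^ 2 - 1)) / a : ℝ) : ℂ) ^ (-s) =
        ((2 * n + 4 : ℕ) : ℂ) * ((((n : ℝ) + 1 + 2 * a ^ 2) / a : ℝ) : ℂ) ^ (-s) := by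
    rw [show ((n : ℝ) + 3) + 2 * (a ^ 2 - 1) = (n : ℝ) + 1 + 2 * a ^ 2 by ring]
    push_cast; ring
  simp only [etaBergerCurl, hthird, multBerger_mul_add_sqrt_sub_eq_thetaTerm]

lemma natCast_add_one_mul_ofReal_div_cpow_neg (ha : 0 < a) (s : ℂ) (n : ℕ) :
    ((n : ℂ) + 1) * ((((n : ℝ) + 1) / a : ℝ) : ℂ) ^ (-s) =
      (a : ℂ) ^ s * (1 / ((n : ℂ) + 1) ^ (s - 1)) := by
  have hn : (n : ℂ) + 1 ≠ 0 := by exact_mod_cast n.succ_ne_zero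
  rw [Complex.ofReal_div, Complex.div_cpow_ofReal_nonneg (by positivity) ha.le,
    Complex.cpow_neg (a : ℂ), Complex.cpow_sub _ _ hn, Complex.cpow_one, Complex.cpow_neg]
  push_cast
  field_simp

lemma tsum_add_tsum_eq_riemannZeta (ha : 0 < a) (hs : 2 < s.re) :
    ∑' n : ℕ, (2 * ((n : ℂ) + 2) - 2) * ((((n : ℝ) + 2) / a : ℝ) : ℂ) ^ (-s)
      + ∑' n : ℕ, ((2 * n + 4 : ℕ) : ℂ) * ((((n : ℝ) + 1) / a : ℝ) : ℂ) ^ (-s)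
      = 4 * (a : ℂ) ^ s * riemannZeta (s - 1) := by
  have hW := (summable_norm_mul_ofReal_div_cpow_neg ha hs (x := fun n => (n : ℝ) + 1)
    (fun n => norm_natCast_le_mul_add_one (m := 2 * n) n 2 (by omega)) fun n => le_rfl).of_norm
  have hZ := (summable_norm_mul_ofReal_div_cpow_neg ha hs (x := fun n => (n : ℝ) + 1)
    (fun n => norm_natCast_le_mul_add_one (m := 2 * n + 4) n 4 (by omega)) fun n => le_rfl).of_norm
  have hshift : ∑' n : ℕ, (2 * ((n : ℂ) + 2) - 2) * ((((n : ℝ) + 2) / a : ℝ) : ℂ) ^ (-s) =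
      ∑' n : ℕ, ((2 * n : ℕ) : ℂ) * ((((n : ℝ) + 1) / a : ℝ) : ℂ) ^ (-s) := by
    rw [hW.tsum_eq_zero_add, Nat.cast_mul, Nat.cast_zero, mul_zero, zero_mul, zero_add]
    refine tsum_congr fun n => ?_
    push_cast; ring_nf
  have hsum (n : ℕ) : ((2 * n : ℕ) : ℂ) * ((((n : ℝ) + 1) / a : ℝ) : ℂ) ^ (-s)
      + ((2 * n + 4 : ℕ) : ℂ) * ((((n : ℝ) + 1) / a : ℝ) : ℂ) ^ (-s)
      = 4 * (a : ℂ) ^ s * (1 / ((n : ℂ) + 1) ^ (s - 1)) := by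
    rw [← add_mul, mul_assoc, ← natCast_add_one_mul_ofReal_div_cpow_neg ha]
    push_cast; ring
  rw [hshift, ← hW.tsum_add hZ, tsum_congr hsum, tsum_mul_left,
    ← zeta_eq_tsum_one_div_nat_add_one_cpow (by rw [Complex.sub_re, Complex.one_re]; linarith)]

end Berger

/-- **Lemma C.4 of the paper**: for `a > 0` and `Re s > 3` all the series defining
`η_a(s)` and `θ_a(s)` converge absolutely, and
`η_a(s) = θ_a(s) + (2a)^{−s} + 4 aˢ ζ(s−1)`, where `ζ` is the Riemann zeta function. -/
theorem eta_eq_theta_add_zeta (a : ℝ) (ha : 0 < a) (s : ℂ) (hs : 3 < s.re) :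
    Summable (fun n : ℕ =>
      ‖(2 * ((n : ℂ) + 2) - 2) * (((((n : ℝ) + 2) / a) : ℝ) : ℂ) ^ (-s)‖) ∧
    Summable (fun n : ℕ =>
      ‖(2 * ((n : ℂ) + 3) - 2) * ((((((n : ℝ) + 3) + 2 * (a ^ 2 - 1)) / a) : ℝ) : ℂ) ^ (-s)‖) ∧
    Summable (fun n : ℕ => ∑ l ∈ Finset.Icc 1 ((n + 2) / 2),
      ‖(multBerger (n + 2) l : ℂ) *
        (((a + Real.sqrt (a ^ 2 + muBerger a (n + 2) l) : ℝ) : ℂ) ^ (-s)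
          - ((Real.sqrt (a ^ 2 + muBerger a (n + 2) l) - a : ℝ) : ℂ) ^ (-s))‖) ∧
    Summable (fun n : ℕ => ∑ l ∈ Finset.Icc 0 ((n + 1) / 2),
      ‖(multBerger (n + 1) l : ℂ) *
        (((Real.sqrt (a ^ 2 + muBerger a (n + 1) l) + a : ℝ) : ℂ) ^ (-s)
          - ((Real.sqrt (a ^ 2 + muBerger a (n + 1) l) - a : ℝ) : ℂ) ^ (-s))‖) ∧
    etaBergerCurl a s
      = thetaBerger a s + ((2 * a : ℝ) : ℂ) ^ (-s) + 4 * ((a : ℝ) : ℂ) ^ s * riemannZeta (s - 1) := by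
  refine ⟨?_, ?_, ?_, summable_sum_norm_thetaTerm ha hs, ?_⟩
  · refine summable_norm_mul_ofReal_div_cpow_neg ha (by linarith) (C := 2) (fun n => ?_)
      (x := fun n => (n : ℝ) + 2) fun n => by linarith
    rw [show 2 * ((n : ℂ) + 2) - 2 = ((2 * n + 2 : ℕ) : ℂ) by push_cast; ring]
    exact norm_natCast_le_mul_add_one n 2 (by omega)
  · refine summable_norm_mul_ofReal_div_cpow_neg ha (by linarith) (C := 4) (fun n => ?_)
      (x := fun n => ((n : ℝ) + 3) + 2 * (a ^ 2 - 1)) fun n => by nlinarith [sq_nonneg a]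
    rw [show 2 * ((n : ℂ) + 3) - 2 = ((2 * n + 4 : ℕ) : ℂ) by push_cast; ring]
    exact norm_natCast_le_mul_add_one n 4 (by omega)
  · simp only [multBerger_mul_add_sqrt_sub_eq_thetaTerm]
    simpa only [add_assoc, Nat.reduceAdd] using
      (summable_nat_add_iff 1).mpr (summable_sum_Icc_one_norm_thetaTerm ha hs)
  · rw [etaBergerCurl_eq, thetaBerger_eq ha hs, ← tsum_add_tsum_eq_riemannZeta ha (by linarith)]
    ring
end
end

section
/- For every ξ ∈ ℝ³ ∖ {0}, the characteristic polynomial of the complex 3×3 matrix curl_prin(ξ) equals X·(X − ‖ξ‖)·(X + ‖ξ‖); in particular det curl_prin(ξ) = 0 and the eigenvalues of curl_prin(ξ) are exactly 0, +‖ξ‖ and −‖ξ‖, each of algebraic multiplicity one. -/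
/-!
Write `η := Gξ` and let `K(η)` be the skew matrix `K(η)_{αμ} = Σ_ν ε_{αμν} η_ν`; then
`curl_prin(ξ) = -iρ · K(η) G`. The characteristic polynomial of a `3 × 3` matrix `A` is
`X³ - tr A · X² + tr (adj A) · X - det A`. Here `tr (K G) = 0` because `K` is skew and `G`
symmetric, `det K = 0` because `K` is skew of odd order, and `adj K(η) = η ηᵀ`, so
`tr adj (K G) = tr (adj G · η ηᵀ) = ⟨adj G · Gξ, Gξ⟩ = det G · ⟨ξ, Gξ⟩`. Scaling by `-iρ`
multiplies this by `-ρ² = -1 / det G`, leaving `-‖ξ‖²`.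
-/

open Polynomial

noncomputable section

/-- The totally antisymmetric symbol on three indices, with `ε_{123} = 1`. -/
def epsSym (i j k : Fin 3) : ℝ :=
  if (i, j, k) = (0, 1, 2) ∨ (i, j, k) = (1, 2, 0) ∨ (i, j, k) = (2, 0, 1) then 1
  else if (i, j, k) = (2, 1, 0) ∨ (i, j, k) = (1, 0, 2) ∨ (i, j, k) = (0, 2, 1) then -1
  else 0

/-- `‖ξ‖ := (Σ_{μ,ν} G^{μν} ξ_μ ξ_ν)^{1/2}`, the Riemannian norm of a covector. -/
def xiNorm (G : Matrix (Fin 3) (Fin 3) ℝ) (ξ : Fin 3 → ℝ) : ℝ :=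
  Real.sqrt (∑ μ, ∑ ν, G μ ν * ξ μ * ξ ν)

/-- The principal symbol of `curl = *d` acting on 1-forms:
`[curl_prin(ξ)]_α{}^β := −i ρ Σ_{μ,ν,γ} ε_{αμν} G^{μβ} G^{νγ} ξ_γ`, `ρ := (det G)^{-1/2}`. -/
def curlPrin (G : Matrix (Fin 3) (Fin 3) ℝ) (ξ : Fin 3 → ℝ) : Matrix (Fin 3) (Fin 3) ℂ :=
  Matrix.of fun α β =>
    -Complex.I *
      (((Real.sqrt G.det)⁻¹ * ∑ μ, ∑ ν, ∑ γ, epsSym α μ ν * G μ β * G ν γ * ξ γ : ℝ) : ℂ)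

open Matrix

namespace Matrix

variable {R : Type*} [CommRing R]

theorem charpoly_fin_three (A : Matrix (Fin 3) (Fin 3) R) :
    A.charpoly = X ^ 3 - C A.trace * X ^ 2 + C A.adjugate.trace * X - C A.det := by
  simp only [charpoly, charmatrix_apply, det_fin_three, trace_fin_three, adjugate_fin_three,
    of_apply, cons_val', cons_val_zero, cons_val_one, cons_val, cons_val_fin_one, diagonal_apply_eq,
    diagonal_apply_ne, ne_eq, Fin.reduceEq, not_false_eq_true, map_add, map_sub, map_mul]
  ring

variable [NoZeroDivisors R] [CharZero R] {n : Type*} [Fintype n]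

theorem det_eq_zero_of_transpose_eq_neg [DecidableEq n] (hn : Odd (Fintype.card n))
    {K : Matrix n n R} (hK : Kᵀ = -K) : K.det = 0 := by
  have h := congrArg det hK
  rw [det_transpose, det_neg, hn.neg_one_pow, neg_one_mul] at h
  exact CharZero.eq_neg_self_iff.mp h

theorem trace_mul_eq_zero_of_transpose_eq_neg {K G : Matrix n n R} (hK : Kᵀ = -K)
    (hG : G.IsSymm) : (K * G).trace = 0 := by
  have h : (K * G).trace = -(K * G).trace := calc
    (K * G).trace = (K * G)ᵀ.trace := (trace_transpose _).symm
    _ = -(K * G).trace := by rw [transpose_mul, hK, hG.eq, mul_neg, trace_neg, trace_mul_comm]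
  exact CharZero.eq_neg_self_iff.mp h

end Matrix

def crossMatrix (η : Fin 3 → ℝ) : Matrix (Fin 3) (Fin 3) ℝ :=
  of fun α μ => ∑ ν, epsSym α μ ν * η ν

theorem crossMatrix_eq (η : Fin 3 → ℝ) :
    crossMatrix η = !![0, η 2, -η 1; -η 2, 0, η 0; η 1, -η 0, 0] := by
  ext α μ
  fin_cases α <;> fin_cases μ <;> simp [crossMatrix, epsSym, Fin.sum_univ_three]

theorem crossMatrix_transpose (η : Fin 3 → ℝ) : (crossMatrix η)ᵀ = -crossMatrix η := by
  rw [crossMatrix_eq]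
  ext α μ
  fin_cases α <;> fin_cases μ <;> simp

theorem adjugate_crossMatrix (η : Fin 3 → ℝ) : (crossMatrix η).adjugate = vecMulVec η η := by
  rw [crossMatrix_eq, adjugate_fin_three_of]
  ext α μ
  fin_cases α <;> fin_cases μ <;> simp [vecMulVec_apply] <;> ring

theorem trace_adjugate_crossMatrix_mulVec_mul (G : Matrix (Fin 3) (Fin 3) ℝ) (ξ : Fin 3 → ℝ) :
    (crossMatrix (G *ᵥ ξ) * G).adjugate.trace = G.det * (ξ ⬝ᵥ G *ᵥ ξ) := by
  rw [adjugate_mul_distrib, adjugate_crossMatrix, mul_vecMulVec, trace_vecMulVec, mulVec_mulVec,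
    adjugate_mul, smul_mulVec, one_mulVec, smul_dotProduct, smul_eq_mul]

theorem sq_xiNorm {G : Matrix (Fin 3) (Fin 3) ℝ} (hG : G.PosSemidef) (ξ : Fin 3 → ℝ) :
    xiNorm G ξ ^ 2 = ξ ⬝ᵥ G *ᵥ ξ := by
  have hq : ∑ μ, ∑ ν, G μ ν * ξ μ * ξ ν = ξ ⬝ᵥ G *ᵥ ξ := by
    simp only [dotProduct, mulVec, Finset.mul_sum]
    exact Finset.sum_congr rfl fun _ _ => Finset.sum_congr rfl fun _ _ => by ring
  rw [xiNorm, hq, Real.sq_sqrt (by simpa using hG.dotProduct_mulVec_nonneg ξ)]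

theorem curlPrin_eq_smul (G : Matrix (Fin 3) (Fin 3) ℝ) (ξ : Fin 3 → ℝ) :
    curlPrin G ξ = (-Complex.I * ((√G.det)⁻¹ : ℝ)) •
      Complex.ofRealHom.mapMatrix (crossMatrix (G *ᵥ ξ) * G) := by
  ext α β
  simp only [curlPrin, crossMatrix, of_apply, Matrix.smul_apply, RingHom.mapMatrix_apply,
    map_apply, Complex.ofRealHom_eq_coe, mul_apply, mulVec, dotProduct, smul_eq_mul, mul_assoc,
    Finset.mul_sum, Finset.sum_mul]
  push_cast
  simp only [Finset.mul_sum]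
  exact Finset.sum_congr rfl fun _ _ => Finset.sum_congr rfl fun _ _ =>
    Finset.sum_congr rfl fun _ _ => by ring

theorem charpoly_curlPrin_general (G : Matrix (Fin 3) (Fin 3) ℝ)
    (hpos : G.PosDef) (ξ : Fin 3 → ℝ) :
    (curlPrin G ξ).charpoly
      = X * (X - C ((xiNorm G ξ : ℝ) : ℂ)) * (X + C ((xiNorm G ξ : ℝ) : ℂ)) := by
  have hK := crossMatrix_transpose (G *ᵥ ξ)
  have hG : G.IsSymm := isHermitian_iff_isSymm.mp hpos.isHermitian
  have hc : (-Complex.I * ((√G.det)⁻¹ : ℝ)) ^ 2 * (G.det : ℂ) = -1 := by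
    have hdet : (G.det : ℂ) ≠ 0 := Complex.ofReal_ne_zero.mpr hpos.det_pos.ne'
    rw [mul_pow, neg_pow_two, Complex.I_sq, ← Complex.ofReal_pow, inv_pow,
      Real.sq_sqrt hpos.det_pos.le, Complex.ofReal_inv, neg_one_mul, neg_mul, inv_mul_cancel₀ hdet]
  have htrace : (curlPrin G ξ).trace = 0 := by
    rw [curlPrin_eq_smul, trace_smul, RingHom.mapMatrix_apply, ← AddMonoidHom.map_trace,
      trace_mul_eq_zero_of_transpose_eq_neg hK hG, map_zero, smul_zero]
  have hdet : (curlPrin G ξ).det = 0 := by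
    rw [curlPrin_eq_smul, det_smul, ← RingHom.map_det, det_mul,
      det_eq_zero_of_transpose_eq_neg (by decide) hK, zero_mul, map_zero, mul_zero]
  have hadj : (curlPrin G ξ).adjugate.trace = -(xiNorm G ξ ^ 2 : ℝ) := by
    rw [curlPrin_eq_smul, adjugate_smul, ← RingHom.map_adjugate, trace_smul,
      RingHom.mapMatrix_apply, ← AddMonoidHom.map_trace, trace_adjugate_crossMatrix_mulVec_mul,
      sq_xiNorm hpos.posSemidef, Fintype.card_fin, smul_eq_mul, Complex.ofRealHom_eq_coe,
      Complex.ofReal_mul, ← mul_assoc, hc, neg_one_mul]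
  rw [charpoly_fin_three, htrace, hdet, hadj, Complex.ofReal_pow]
  simp only [map_zero, map_neg, map_pow]
  ring

/-- **Formulae (2.2)–(2.4) of the paper**: for `ξ ≠ 0` the characteristic polynomial of
`curl_prin(ξ)` is `X (X − ‖ξ‖)(X + ‖ξ‖)`; in particular `det curl_prin(ξ) = 0` and the
eigenvalues of `curl_prin(ξ)` are exactly `0, ±‖ξ‖`, each simple. -/
theorem charpoly_curlPrin (G : Matrix (Fin 3) (Fin 3) ℝ) (hsym : G.IsSymm)
    (hpos : G.PosDef) (ξ : Fin 3 → ℝ) (hξ : ξ ≠ 0) :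
    (curlPrin G ξ).charpoly
      = X * (X - C ((xiNorm G ξ : ℝ) : ℂ)) * (X + C ((xiNorm G ξ : ℝ) : ℂ)) :=
  charpoly_curlPrin_general G hpos ξ
end
end

section
/- For every y ∈ ℝ³, the integral (2π)^{−3} ∫_{ℝ³} ⟨ξ⟩^{−5} e^{−i⟨y,ξ⟩} dξ is a real number and equals (1/(12π²)) ∫_ℝ cos(|y| t) (1+t²)^{−3/2} dt. (This is Lemma 7.2 of the paper in its Bessel-free intermediate form; by Basset's integral the common value is (1/(6π²)) |y| K₁(|y|), where K₁ is the modified Bessel function of the second kind.) -/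
/-!
Rotate `ξ` so that `y` points along the first coordinate axis, which turns `⟨y, ξ⟩` into
`‖y‖ t` with `t = ξ₀`, and write `ξ = (t, w)` with `w ∈ ℝ²`. By Fubini the `w`-integral
comes first, and in polar coordinates it is elementary:
`∫_{ℝ²} (1 + t² + |w|²)^{-s} dw = π (1 + t²)^{1-s} / (s - 1)`. What remains is the Fourier
transform of the even function `(1 + t²)^{1-s}`, which is real and equal to its cosine
transform. The theorem is the case `s = 5/2`.
-/

open MeasureTheory Set Filter Topology

lemma Real.sqrt_zpow {a : ℝ} (ha : 0 ≤ a) (k : ℤ) : √a ^ k = a ^ ((k : ℝ) / 2) := by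
  rw [Real.sqrt_eq_rpow, ← Real.rpow_intCast, ← Real.rpow_mul ha]
  ring_nf

lemma integral_Ioi_mul_rpow_add_sq {a s : ℝ} (ha : 0 < a) (hs : 1 < s) :
    ∫ r in Ioi (0 : ℝ), r * (a + r ^ 2) ^ (-s) = a ^ (1 - s) / (2 * (s - 1)) := by
  have hderiv (r : ℝ) : HasDerivAt (fun r ↦ -(a + r ^ 2) ^ (1 - s) / (2 * (s - 1)))
      (r * (a + r ^ 2) ^ (-s)) r := by
    have h := ((hasDerivAt_pow 2 r).const_add a).rpow_const (p := 1 - s)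
      (Or.inl (by positivity : a + r ^ 2 ≠ 0))
    refine (h.neg.div_const (2 * (s - 1))).congr_deriv ?_
    have hs' : s - 1 ≠ 0 := by linarith
    rw [show 1 - s - 1 = -s by ring]
    field_simp
    ring
  have hlim : Tendsto (fun r : ℝ ↦ -(a + r ^ 2) ^ (1 - s) / (2 * (s - 1))) atTop (𝓝 0) := by
    have h := (tendsto_rpow_neg_atTop (by linarith : 0 < s - 1)).comp
      (tendsto_atTop_add_const_left _ a (tendsto_pow_atTop two_ne_zero))
    simpa [neg_sub] using h.neg.div_const (2 * (s - 1))
  rw [integral_Ioi_of_hasDerivAt_of_nonneg' (fun r _ ↦ hderiv r)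
    (fun r hr ↦ mul_nonneg hr.out.le (by positivity)) hlim]
  simp [neg_div]

lemma EuclideanSpace.integral_fun_norm_fin_two {F : Type*} [NormedAddCommGroup F]
    [NormedSpace ℝ F] (f : ℝ → F) :
    ∫ ζ : EuclideanSpace ℝ (Fin 2), f ‖ζ‖ = (2 * Real.pi) • ∫ r in Ioi (0 : ℝ), r • f r := by
  rw [integral_fun_norm_addHaar, finrank_euclideanSpace_fin, Measure.real, volume_ball_fin_two]
  simp [Real.pi_pos.le, ← smul_smul, ofNat_smul_eq_nsmul]

lemma EuclideanSpace.integral_rpow_add_norm_sq_fin_two {a s : ℝ} (ha : 0 < a) (hs : 1 < s) :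
    ∫ ζ : EuclideanSpace ℝ (Fin 2), (a + ‖ζ‖ ^ 2) ^ (-s) = Real.pi / (s - 1) * a ^ (1 - s) := by
  rw [EuclideanSpace.integral_fun_norm_fin_two (fun r ↦ (a + r ^ 2) ^ (-s))]
  simp only [smul_eq_mul]
  rw [integral_Ioi_mul_rpow_add_sq ha hs]
  have : s - 1 ≠ 0 := by linarith
  field_simp

lemma Complex.norm_exp_neg_I_mul_ofReal (x : ℝ) : ‖Complex.exp (-Complex.I * x)‖ = 1 := by
  simp [Complex.norm_exp]

lemma MeasureTheory.Integrable.ofReal_mul_exp_neg_I_mul {α : Type*} [MeasurableSpace α]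
    {μ : Measure α} {g φ : α → ℝ} (hg : Integrable g μ) (hφ : Measurable φ) :
    Integrable (fun x ↦ (g x : ℂ) * Complex.exp (-Complex.I * φ x)) μ :=
  hg.ofReal.mul_bdd (c := 1) (by fun_prop)
    (Eventually.of_forall fun x ↦ (Complex.norm_exp_neg_I_mul_ofReal (φ x)).le)

lemma integral_ofReal_mul_exp_neg_I_mul_of_even {g : ℝ → ℝ} (hg : Integrable g)
    (heven : ∀ t, g (-t) = g t) (r : ℝ) :
    ∫ t : ℝ, (g t : ℂ) * Complex.exp (-Complex.I * ((r * t : ℝ) : ℂ))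
      = ((∫ t : ℝ, Real.cos (r * t) * g t : ℝ) : ℂ) := by
  set I := ∫ t : ℝ, (g t : ℂ) * Complex.exp (-Complex.I * ((r * t : ℝ) : ℂ))
  have hexp (t : ℝ) : -Complex.I * ((r * t : ℝ) : ℂ) = ((-(r * t) : ℝ) : ℂ) * Complex.I := by
    push_cast
    ring
  have hint := hg.ofReal_mul_exp_neg_I_mul (φ := fun t ↦ r * t) (by fun_prop)
  -- the substitution `t ↦ -t` turns `I` into its complex conjugate
  have hreal : (starRingEnd ℂ) I = I := by
    rw [← integral_conj, ← integral_neg_eq_self]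
    congr 1 with t
    rw [map_mul, Complex.conj_ofReal, ← Complex.exp_conj, heven]
    congr 1
    simp
  rw [← Complex.conj_eq_iff_re.mp hreal, ← RCLike.re_to_complex, ← integral_re hint]
  congr 2 with t
  rw [RCLike.re_to_complex, hexp, Complex.re_ofReal_mul, Complex.exp_ofReal_mul_I_re,
    Real.cos_neg, mul_comm]

section Rotation

variable {E : Type*} [NormedAddCommGroup E] [InnerProductSpace ℝ E] {n : ℕ}

lemma exists_orthonormalBasis_norm_smul_eq (hn : Module.finrank ℝ E = n + 1) (y : E) :
    ∃ b : OrthonormalBasis (Fin (n + 1)) ℝ E, ‖y‖ • b 0 = y := by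
  have : Nontrivial E := Module.nontrivial_of_finrank_eq_succ hn
  have : FiniteDimensional ℝ E := Module.finite_of_finrank_eq_succ hn
  obtain ⟨u, hu, hyu⟩ : ∃ u : E, ‖u‖ = 1 ∧ ‖y‖ • u = y := by
    rcases eq_or_ne y 0 with rfl | hy
    · obtain ⟨u, hu⟩ := exists_norm_eq E zero_le_one
      exact ⟨u, hu, by simp⟩
    · exact ⟨‖y‖⁻¹ • y, norm_smul_inv_norm hy, smul_inv_smul₀ (norm_ne_zero_iff.mpr hy) y⟩
  have hv : Orthonormal ℝ (({0} : Set (Fin (n + 1))).domRestrict fun _ ↦ u) :=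
    ⟨fun _ ↦ hu, fun i j hij ↦ absurd (Subsingleton.elim i j) hij⟩
  obtain ⟨b, hb⟩ := hv.exists_orthonormalBasis_extension_of_card_eq (by simpa using hn)
  exact ⟨b, by rw [hb 0 rfl, hyu]⟩

lemma OrthonormalBasis.inner_smul_repr_symm (b : OrthonormalBasis (Fin (n + 1)) ℝ E) (c : ℝ)
    (x : EuclideanSpace ℝ (Fin (n + 1))) :
    inner ℝ (c • b 0) (b.repr.symm x) = c * x 0 := by
  rw [real_inner_smul_left, ← b.repr_apply_apply, LinearIsometryEquiv.apply_symm_apply]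

variable [FiniteDimensional ℝ E] [MeasurableSpace E] [BorelSpace E]
  {F : Type*} [NormedAddCommGroup F] [NormedSpace ℝ F]

lemma integral_fun_norm_inner (hn : Module.finrank ℝ E = n + 1) (y : E) (f : ℝ → ℝ → F) :
    ∫ ξ : E, f ‖ξ‖ (inner ℝ y ξ)
      = ∫ x : EuclideanSpace ℝ (Fin (n + 1)), f ‖x‖ (‖y‖ * x 0) := by
  obtain ⟨b, hb⟩ := exists_orthonormalBasis_norm_smul_eq hn y
  rw [← b.measurePreserving_repr_symm.integral_comp b.repr.symm.toHomeomorph.measurableEmbedding]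
  have hinner (x : EuclideanSpace ℝ (Fin (n + 1))) : inner ℝ y (b.repr.symm x) = ‖y‖ * x 0 := by
    rw [← b.inner_smul_repr_symm, hb]
  simp_rw [LinearIsometryEquiv.norm_map, hinner]

end Rotation

section Slicing

variable {F : Type*} [NormedAddCommGroup F] [NormedSpace ℝ F] {n : ℕ}

lemma EuclideanSpace.norm_toLp_cons_sq (t : ℝ) (w : EuclideanSpace ℝ (Fin n)) :
    ‖WithLp.toLp 2 (Fin.cons t w.ofLp : Fin (n + 1) → ℝ)‖ ^ 2 = t ^ 2 + ‖w‖ ^ 2 := by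
  simp [EuclideanSpace.norm_sq_eq, Fin.sum_univ_succ]

lemma EuclideanSpace.integral_fin_succ {f : EuclideanSpace ℝ (Fin (n + 1)) → F}
    (hf : Integrable f) :
    ∫ x, f x = ∫ t : ℝ, ∫ w : EuclideanSpace ℝ (Fin n),
      f (WithLp.toLp 2 (Fin.cons t w.ofLp : Fin (n + 1) → ℝ)) := by
  let e : ℝ × EuclideanSpace ℝ (Fin n) ≃ᵐ EuclideanSpace ℝ (Fin (n + 1)) :=
    ((MeasurableEquiv.refl ℝ).prodCongr (MeasurableEquiv.toLp 2 (Fin n → ℝ)).symm).trans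
      ((MeasurableEquiv.piFinSuccAbove (fun _ ↦ ℝ) 0).symm.trans (MeasurableEquiv.toLp 2 _))
  have he : MeasurePreserving e := by
    refine (MeasurePreserving.prod (MeasurePreserving.id volume)
      (EuclideanSpace.volume_preserving_symm_measurableEquiv_toLp (Fin n))).trans ?_
    exact ((volume_preserving_piFinSuccAbove (fun _ ↦ ℝ) 0).symm _).trans
      (EuclideanSpace.volume_preserving_symm_measurableEquiv_toLp (Fin (n + 1))).symm
  rw [← he.integral_comp' f, Measure.volume_eq_prod, integral_prod]
  · congr 1 with t
    congr 1 with w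
    congr 1
    ext i
    simp [e, MeasurableEquiv.piFinSuccAbove, MeasurableEquiv.prodCongr]
  · rw [← Measure.volume_eq_prod]
    exact he.integrable_comp_of_integrable hf

end Slicing

lemma integral_rpow_neg_one_add_norm_sq_mul_exp_inner {E : Type*} [NormedAddCommGroup E]
    [InnerProductSpace ℝ E] [FiniteDimensional ℝ E] [MeasurableSpace E] [BorelSpace E]
    (hE : Module.finrank ℝ E = 3) (y : E) {s : ℝ} (hs : 3 / 2 < s) :
    ∫ ξ : E, (((1 + ‖ξ‖ ^ 2) ^ (-s) : ℝ) : ℂ) * Complex.exp (-Complex.I * (inner ℝ y ξ : ℝ))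
      = ((Real.pi / (s - 1) * ∫ t : ℝ, Real.cos (‖y‖ * t) * (1 + t ^ 2) ^ (1 - s) : ℝ) : ℂ) := by
  have hint : Integrable fun x : EuclideanSpace ℝ (Fin 3) ↦
      (((1 + ‖x‖ ^ 2) ^ (-s) : ℝ) : ℂ) * Complex.exp (-Complex.I * (‖y‖ * x 0 : ℝ)) := by
    have h := integrable_rpow_neg_one_add_norm_sq (E := EuclideanSpace ℝ (Fin 3)) (μ := volume)
      (r := 2 * s) (by rw [finrank_euclideanSpace_fin, Nat.cast_ofNat]; linarith)
    rw [show -(2 * s) / 2 = -s by ring] at h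
    exact h.ofReal_mul_exp_neg_I_mul (by fun_prop)
  have hg : Integrable fun t : ℝ ↦ (1 + t ^ 2) ^ (1 - s) := by
    have h := integrable_rpow_neg_one_add_norm_sq (E := ℝ) (μ := volume)
      (r := 2 * (s - 1)) (by rw [Module.finrank_self, Nat.cast_one]; linarith)
    simpa [show -(2 * (s - 1)) / 2 = 1 - s by ring] using h
  have hfiber (t : ℝ) : ∫ w : EuclideanSpace ℝ (Fin 2),
      (((1 + (t ^ 2 + ‖w‖ ^ 2)) ^ (-s) : ℝ) : ℂ) * Complex.exp (-Complex.I * (‖y‖ * t : ℝ))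
      = ((Real.pi / (s - 1) : ℝ) : ℂ)
        * ((((1 + t ^ 2) ^ (1 - s) : ℝ) : ℂ) * Complex.exp (-Complex.I * (‖y‖ * t : ℝ))) := by
    simp_rw [← add_assoc]
    rw [integral_mul_const, integral_complex_ofReal,
      EuclideanSpace.integral_rpow_add_norm_sq_fin_two (by positivity) (by linarith),
      Complex.ofReal_mul, mul_assoc]
  rw [integral_fun_norm_inner hE y
      (fun a b ↦ (((1 + a ^ 2) ^ (-s) : ℝ) : ℂ) * Complex.exp (-Complex.I * b)),
    EuclideanSpace.integral_fin_succ hint]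
  simp only [EuclideanSpace.norm_toLp_cons_sq, Fin.cons_zero, hfiber]
  rw [integral_const_mul, integral_ofReal_mul_exp_neg_I_mul_of_even hg (by simp) ‖y‖,
    Complex.ofReal_mul]

/-- **Lemma 7.2 of the paper** (Bessel-free intermediate form): for every `y ∈ ℝ³`,
`(2π)⁻³ ∫_{ℝ³} ⟨ξ⟩⁻⁵ e^{−i⟨y,ξ⟩} dξ` is a real number and equals
`(1/(12π²)) ∫_ℝ cos(|y| t)(1 + t²)^{−3/2} dt`. -/
theorem bessel_integral_lemma (y : EuclideanSpace ℝ (Fin 3)) :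
    (((2 * Real.pi) ^ (-3 : ℤ) : ℝ) : ℂ) *
        ∫ ξ : EuclideanSpace ℝ (Fin 3),
          (((Real.sqrt (1 + ‖ξ‖ ^ 2)) ^ (-5 : ℤ) : ℝ) : ℂ) *
            Complex.exp (-Complex.I * ((inner ℝ y ξ : ℝ) : ℂ))
      = (((1 / (12 * Real.pi ^ 2)) *
            ∫ t : ℝ, Real.cos (‖y‖ * t) * (Real.sqrt (1 + t ^ 2)) ^ (-3 : ℤ) : ℝ) : ℂ) := by
  have h5 : ((-5 : ℤ) : ℝ) / 2 = -(5 / 2) := by norm_num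
  have h3 : ((-3 : ℤ) : ℝ) / 2 = 1 - 5 / 2 := by norm_num
  simp (disch := positivity) only [Real.sqrt_zpow, h5, h3]
  rw [integral_rpow_neg_one_add_norm_sq_mul_exp_inner finrank_euclideanSpace_fin y
    (by norm_num), ← Complex.ofReal_mul, ← mul_assoc]
  congr 2
  rw [zpow_neg, zpow_ofNat]
  field_simp
  ring
end
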